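/- Let D be a connected digraph and E' a cycle-free subset of edges of D of size k. If T is an oriented spanning tree of the contraction D/E' rooted at the image of a vertex r, then the subgraph of D with edge set E(T) ∪ E' is an i-spanning tree of D rooted at r for some 0 ≤ i ≤ k. -/

import Mathlib

open Classical

/-- A finite multidigraph: finite vertex and edge types with initial and final
vertex maps. -/
structure Multidigraph where
  V : Type
  E : Type
  [fintV : Fintype V]
  [fintE : Fintype E]
  first : E → V
  last : E → V

attribute [instance] Multidigraph.fintV Multidigraph.fintE

namespace Multidigraph

variable (D : Multidigraph)

/-- The out-degree of a vertex. -/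
noncomputable def outdeg (v : D.V) : ℕ := Nat.card {e : D.E // D.first e = v}

/-- The in-degree of a vertex. -/
noncomputable def indeg (v : D.V) : ℕ := Nat.card {e : D.E // D.last e = v}

/-- Undirected adjacency using only edges in `T`. -/
def Adj (T : Set D.E) (a b : D.V) : Prop :=
  ∃ e ∈ T, (D.first e = a ∧ D.last e = b) ∨ (D.first e = b ∧ D.last e = a)

/-- Undirected reachability using only edges in `T`. -/
def Reach (T : Set D.E) : D.V → D.V → Prop := Relation.ReflTransGen (D.Adj T)

/-- The underlying undirected graph is connected. -/
def Connected : Prop := ∀ a b : D.V, D.Reach Set.univ a b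

/-- An Eulerian digraph: connected and with in-degree equal to out-degree at
every vertex. -/
def Eulerian : Prop := D.Connected ∧ ∀ v : D.V, D.indeg v = D.outdeg v

/-- `T` is a spanning tree of the underlying undirected graph: it connects all
vertices and has `|V| - 1` edges. -/
def IsSpanningTree (T : Set D.E) : Prop :=
  (∀ a b : D.V, D.Reach T a b) ∧ Nat.card T = Nat.card D.V - 1

/-- The out-degree of `v` in the subgraph `T` after reversing the orientations
of the edges in `S`. -/
noncomputable def outdegRev (T S : Set D.E) (v : D.V) : ℕ :=
  Nat.card {e : D.E // (e ∈ T \ S ∧ D.first e = v) ∨ (e ∈ S ∧ D.last e = v)}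

/-- `T` becomes an oriented spanning tree rooted at `r` (every vertex has a
unique directed path to `r`, i.e. every non-root vertex has out-degree `1` and
the root has out-degree `0` in the tree) after reversing exactly the edges of
`S ⊆ T`. -/
def IsOrientedSpanningTreeRev (T S : Set D.E) (r : D.V) : Prop :=
  D.IsSpanningTree T ∧ S ⊆ T ∧ (∀ v : D.V, v ≠ r → D.outdegRev T S v = 1) ∧
    D.outdegRev T S r = 0

/-- `T` is an oriented spanning tree rooted at `r`: every vertex has a unique
directed path to `r`. -/
def IsOrientedSpanningTree (T : Set D.E) (r : D.V) : Prop :=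
  D.IsOrientedSpanningTreeRev T ∅ r

/-- `T` is a `k`-spanning tree rooted at `r`: reversing the orientation of
exactly `k` of its edges yields an oriented spanning tree rooted at `r`. -/
def IsKSpanningTree (T : Set D.E) (r : D.V) (k : ℕ) : Prop :=
  ∃ S : Set D.E, Nat.card S = k ∧ D.IsOrientedSpanningTreeRev T S r

/-- `c D k r` is the number of `k`-spanning trees of `D` rooted at `r`. -/
noncomputable def c (k : ℕ) (r : D.V) : ℕ :=
  Nat.card {T : Set D.E // D.IsKSpanningTree T r k}

/-- The transpose digraph: every edge reversed. -/
def transpose : Multidigraph := { D with first := D.last, last := D.first }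

end Multidigraph


namespace Multidigraph

variable (D : Multidigraph)

/-- A set of edges is cycle-free if no edge connects two vertices that are
already connected by the remaining edges of the set (no undirected cycles). -/
def CycleFree (E' : Set D.E) : Prop :=
  ∀ e ∈ E', ¬ D.Reach (E' \ {e}) (D.first e) (D.last e)

/-- The relation on vertices induced by the contracted edges. -/
def contractRel (E' : Set D.E) (a b : D.V) : Prop :=
  ∃ e ∈ E', D.first e = a ∧ D.last e = b

/-- The contraction `D/E'`: vertices are identified along the edges of `E'`,
and the edges of `E'` are removed. -/
noncomputable def contract (E' : Set D.E) : Multidigraph where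
  V := Quotient (Relation.EqvGen.setoid (D.contractRel E'))
  E := {e : D.E // e ∉ E'}
  fintV := Fintype.ofFinite _
  fintE := Fintype.ofFinite _
  first e := Quotient.mk _ (D.first e.1)
  last e := Quotient.mk _ (D.last e.1)

end Multidigraph

/-!
Each class of `D/E'` is spanned by a tree of `E'`. Choose in every class a root: `r` in the
class of `r`, and otherwise the tail of the unique edge of `T` leaving the class. Reversing the
edges of `E'` that point away from the root of their class (at most `k` edges) leaves every
vertex other than a class root with exactly one outgoing edge of `E'`, the first edge on its
path to the root, and the class roots other than `r` with exactly their outgoing edge of `T`.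
So every vertex except `r` has out-degree one, and since `E(T) ∪ E'` is connected, counting
edges by their tails shows that it is a spanning tree.
-/

namespace Multidigraph

variable {D : Multidigraph} {F H : Set D.E} {a b v w x y ρ : D.V} {e f : D.E}

lemma Adj.symm (h : D.Adj F a b) : D.Adj F b a := by
  obtain ⟨e, he, hab⟩ := h
  exact ⟨e, he, hab.symm⟩

lemma Reach.symm (h : D.Reach F a b) : D.Reach F b a :=
  Relation.ReflTransGen.mono (fun _ _ => Adj.symm) _ _ (Relation.ReflTransGen.swap _ _ h)

lemma Reach.mono (hFH : F ⊆ H) (h : D.Reach F a b) : D.Reach H a b :=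
  Relation.ReflTransGen.mono (fun _ _ ⟨e, he, hab⟩ => ⟨e, hFH he, hab⟩) _ _ h

lemma reach_of_incident (hf : f ∈ F) (hv : D.first f = v ∨ D.last f = v)
    (hw : D.first f = w ∨ D.last f = w) : D.Reach F v w := by
  have hstep : D.Reach F (D.first f) (D.last f) := .single ⟨f, hf, .inl ⟨rfl, rfl⟩⟩
  rcases hv with rfl | rfl <;> rcases hw with rfl | rfl
  exacts [.refl, hstep, hstep.symm, .refl]

lemma Reach.diff_singleton_or
    (hxy : (D.first e = x ∧ D.last e = y) ∨ (D.first e = y ∧ D.last e = x))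
    (h : D.Reach F a b) :
    D.Reach (F \ {e}) a b ∨ D.Reach (F \ {e}) a x ∨ D.Reach (F \ {e}) a y := by
  suffices D.Reach (F \ {e}) a b ∨ D.Reach (F \ {e}) a (D.first e) ∨
      D.Reach (F \ {e}) a (D.last e) by
    rcases hxy with ⟨rfl, rfl⟩ | ⟨rfl, rfl⟩
    exacts [this, this.imp_right Or.symm]
  induction h with
  | refl => exact .inl .refl
  | tail _ hadj ih =>
    obtain ⟨f, hf, hend⟩ := hadj
    by_cases hfe : f = e
    · subst hfe
      refine .inr (ih.elim (fun h => ?_) id)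
      rcases hend with ⟨rfl, -⟩ | ⟨-, rfl⟩
      exacts [.inl h, .inr h]
    · exact ih.imp_left (·.tail ⟨f, ⟨hf, hfe⟩, hend⟩)

lemma CycleFree.subset (hFH : F ⊆ H) (hH : D.CycleFree H) : D.CycleFree F :=
  fun e he h => hH e (hFH he) (h.mono (Set.sdiff_subset_sdiff_left hFH))

lemma CycleFree.not_reach_diff (hcf : D.CycleFree F) (he : e ∈ F)
    (hab : (D.first e = a ∧ D.last e = b) ∨ (D.first e = b ∧ D.last e = a)) :
    ¬ D.Reach (F \ {e}) a b := by
  rcases hab with ⟨rfl, rfl⟩ | ⟨rfl, rfl⟩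
  exacts [hcf e he, fun h => hcf e he h.symm]

lemma CycleFree.xor_reach_diff (hcf : D.CycleFree F) (he : e ∈ F)
    (hreach : D.Reach F (D.first e) ρ) :
    Xor (D.Reach (F \ {e}) (D.first e) ρ) (D.Reach (F \ {e}) (D.last e) ρ) := by
  rw [xor_iff_or_and_not_and]
  refine ⟨?_, fun ⟨h₁, h₂⟩ => hcf e he (h₁.trans h₂.symm)⟩
  rcases hreach.symm.diff_singleton_or (.inl ⟨rfl, rfl⟩) with h | h | h
  exacts [.inl h.symm, .inl h.symm, .inr h.symm]

def separatingEdges (F : Set D.E) (v ρ : D.V) : Set D.E :=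
  {e | e ∈ F ∧ (D.first e = v ∨ D.last e = v) ∧ ¬ D.Reach (F \ {e}) v ρ}

lemma separatingEdges_subsingleton (hreach : D.Reach F v ρ) :
    (D.separatingEdges F v ρ).Subsingleton := by
  rintro f₁ ⟨hf₁, hv₁, hsep₁⟩ f₂ ⟨hf₂, hv₂, hsep₂⟩
  by_contra hne
  -- a path from `ρ` to `v`, stopped at the first of `f₁`, `f₂` it uses and closed by that edge,
  -- avoids the other one
  obtain ⟨z, hz, hρz⟩ : ∃ z, (D.first f₂ = z ∨ D.last f₂ = z) ∧ D.Reach (F \ {f₂}) ρ z := by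
    rcases hreach.symm.diff_singleton_or (.inl ⟨rfl, rfl⟩) with h | h | h
    exacts [absurd h.symm hsep₂, ⟨_, .inl rfl, h⟩, ⟨_, .inr rfl, h⟩]
  rcases hρz.diff_singleton_or (.inl ⟨rfl, rfl⟩) with h | h | h
  · exact hsep₁ ((reach_of_incident (Set.mem_sdiff_singleton.2 ⟨hf₂, Ne.symm hne⟩) hv₂ hz).trans
      (h.mono (Set.sdiff_subset_sdiff_left Set.sdiff_subset)).symm)
  all_goals exact hsep₂ ((reach_of_incident (Set.mem_sdiff_singleton.2 ⟨hf₁, hne⟩) hv₁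
      (by simp)).trans (h.mono Set.sdiff_subset).symm)

lemma CycleFree.separatingEdges_nonempty (hcf : D.CycleFree F) (hreach : D.Reach F v ρ)
    (hne : v ≠ ρ) : (D.separatingEdges F v ρ).Nonempty := by
  induction hn : F.ncard using Nat.strong_induction_on generalizing F with
  | _ n ih =>
    obtain rfl | ⟨c, ⟨e₀, he₀, hvc⟩, -⟩ := hreach.cases_head
    · exact absurd rfl hne
    by_cases hsep : D.Reach (F \ {e₀}) v ρ
    swap
    · exact ⟨e₀, he₀, hvc.imp (·.1) (·.2), hsep⟩
    have hlt : (F \ {e₀}).ncard < n := hn ▸ Set.ncard_sdiff_singleton_lt_of_mem he₀ F.toFinite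
    obtain ⟨f, ⟨hf, -⟩, hfv, hsepf⟩ := ih _ hlt (hcf.subset Set.sdiff_subset) hsep rfl
    refine ⟨f, hf, hfv, fun hreachf => ?_⟩
    -- without `e₀` and `f`, `ρ` still reaches `c`, closing a cycle through `e₀`
    have hρc : D.Reach ((F \ {e₀}) \ {f}) ρ c := by
      rw [Set.sdiff_sdiff_comm]
      rcases hreachf.symm.diff_singleton_or hvc with h | h | h
      · exact absurd (by rw [Set.sdiff_sdiff_comm]; exact h.symm) hsepf
      · exact absurd (by rw [Set.sdiff_sdiff_comm]; exact h.symm) hsepf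
      · exact h
    exact hcf.not_reach_diff he₀ hvc (hsep.trans (hρc.mono Set.sdiff_subset))

def edgesPointingAway (F : Set D.E) (root : D.V → D.V) : Set D.E :=
  {e | e ∈ F ∧ D.Reach (F \ {e}) (D.first e) (root (D.first e))}

lemma outdegRev_eq_ncard (T S : Set D.E) (v : D.V) :
    D.outdegRev T S v = {e | (e ∈ T \ S ∧ D.first e = v) ∨ (e ∈ S ∧ D.last e = v)}.ncard :=
  Nat.card_coe_set_eq _

def outEdges (T : Set D.E) (v : D.V) : Set D.E := {e | e ∈ T ∧ D.first e = v}

lemma outdegRev_empty (T : Set D.E) (v : D.V) : D.outdegRev T ∅ v = (D.outEdges T v).ncard := by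
  rw [outdegRev_eq_ncard]
  simp [outEdges]

lemma CycleFree.outSet_edgesPointingAway {root : D.V → D.V} (hcf : D.CycleFree F)
    (hreach : ∀ v, D.Reach F v (root v)) (hconst : ∀ a b, D.Reach F a b → root a = root b)
    (v : D.V) :
    {e | (e ∈ F \ D.edgesPointingAway F root ∧ D.first e = v) ∨
      (e ∈ D.edgesPointingAway F root ∧ D.last e = v)} = D.separatingEdges F v (root v) := by
  ext e
  by_cases he : e ∈ F
  swap
  · simp [he, edgesPointingAway, separatingEdges]
  have hroot_e : root (D.last e) = root (D.first e) :=
    hconst _ _ (reach_of_incident he (.inr rfl) (.inl rfl))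
  have hxor := hcf.xor_reach_diff he (hreach (D.first e))
  rw [Xor] at hxor
  simp only [edgesPointingAway, separatingEdges, Set.mem_ofPred_eq, Set.mem_sdiff, he, true_and]
  constructor
  · rintro (⟨hX, rfl⟩ | ⟨hX, rfl⟩)
    · exact ⟨.inl rfl, hX⟩
    · exact ⟨.inr rfl, by rw [hroot_e]; tauto⟩
  · rintro ⟨rfl | rfl, hsep⟩
    · exact .inl ⟨hsep, rfl⟩
    · rw [hroot_e] at hsep
      exact .inr ⟨by tauto, rfl⟩

lemma CycleFree.outdegRev_edgesPointingAway {root : D.V → D.V} (hcf : D.CycleFree F)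
    (hreach : ∀ v, D.Reach F v (root v)) (hconst : ∀ a b, D.Reach F a b → root a = root b)
    (v : D.V) :
    D.outdegRev F (D.edgesPointingAway F root) v = if v = root v then 0 else 1 := by
  rw [outdegRev_eq_ncard, hcf.outSet_edgesPointingAway hreach hconst]
  split_ifs with hv
  · rw [Set.ncard_eq_zero]
    exact Set.eq_empty_of_forall_notMem fun e ⟨_, _, hsep⟩ => hsep (hv ▸ .refl)
  · obtain ⟨f, hf⟩ := hcf.separatingEdges_nonempty (hreach v) hv
    exact Set.ncard_eq_one.2 ⟨f, (separatingEdges_subsingleton (hreach v)).eq_singleton_of_mem hf⟩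

lemma outdegRev_union {A B S : Set D.E} (hAB : Disjoint A B) (hS : S ⊆ B) (v : D.V) :
    D.outdegRev (A ∪ B) S v = D.outdegRev A ∅ v + D.outdegRev B S v := by
  simp only [outdegRev_eq_ncard]
  rw [← Set.ncard_union_eq _ (Set.toFinite _) (Set.toFinite _)]
  · congr 1
    ext e
    have : e ∈ A → e ∉ S := fun h hS' => Set.disjoint_left.1 hAB h (hS hS')
    simp only [Set.mem_ofPred_eq, Set.mem_union, Set.mem_sdiff, Set.mem_empty_iff_false]
    tauto
  · rw [Set.disjoint_left]
    rintro e (⟨⟨heA, -⟩, -⟩ | ⟨⟨⟩, -⟩) (⟨⟨heB, -⟩, -⟩ | ⟨heS, -⟩)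
    exacts [Set.disjoint_left.1 hAB heA heB, Set.disjoint_left.1 hAB heA (hS heS)]

lemma card_eq_sum_outdegRev {T S : Set D.E} (hS : S ⊆ T) :
    Nat.card T = ∑ v, D.outdegRev T S v := by
  classical
  let head : D.E → D.V := fun e => if e ∈ S then D.last e else D.first e
  have hfiber : ∀ v, D.outdegRev T S v = {e ∈ T.toFinset | head e = v}.card := by
    intro v
    rw [outdegRev_eq_ncard, ← Set.ncard_coe_finset]
    congr 1
    ext e
    by_cases heS : e ∈ S
    · simp [head, heS, hS heS]
    · simp [head, heS]
  rw [Nat.card_coe_set_eq, Set.ncard_eq_toFinset_card',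
    Finset.card_eq_sum_card_fiberwise fun e _ => Finset.mem_univ (head e)]
  simp only [hfiber]

lemma isOrientedSpanningTreeRev_of_outdegRev {T S : Set D.E} {r : D.V}
    (hreach : ∀ a b, D.Reach T a b) (hS : S ⊆ T)
    (hdeg : ∀ v, D.outdegRev T S v = if v = r then 0 else 1) :
    D.IsOrientedSpanningTreeRev T S r := by
  refine ⟨⟨hreach, ?_⟩, hS, fun v hv => by simpa [hv] using hdeg v, by simpa using hdeg r⟩
  rw [card_eq_sum_outdegRev hS, Finset.sum_congr rfl fun v _ => hdeg v, Nat.card_eq_fintype_card]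
  simp [Finset.sum_ite, Finset.filter_ne']

abbrev toContract (E' : Set D.E) (v : D.V) : (D.contract E').V := Quotient.mk _ v

lemma toContract_eq_iff {E' : Set D.E} : toContract E' a = toContract E' b ↔ D.Reach E' a b := by
  have hAdj : D.Adj E' = Relation.SymmGen (D.contractRel E') := by
    ext a b
    simp only [Adj, Relation.SymmGen, contractRel, and_or_left, exists_or]
  refine Quotient.eq.trans ?_
  change Relation.EqvGen _ a b ↔ Relation.ReflTransGen _ a b
  rw [hAdj, Relation.EqvGen.reflTransGen_symmGen]

lemma Reach.of_contract {E' : Set D.E} {T : Set (D.contract E').E}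
    (h : (D.contract E').Reach T (toContract E' a) (toContract E' b)) :
    D.Reach (Subtype.val '' T ∪ E') a b := by
  suffices ∀ q, (D.contract E').Reach T (toContract E' a) q →
      ∀ b, toContract E' b = q → D.Reach (Subtype.val '' T ∪ E') a b from this _ h b rfl
  intro q hq
  induction hq with
  | refl => exact fun b hb => (toContract_eq_iff.1 hb.symm).mono Set.subset_union_right
  | tail _ hadj ih =>
    rintro b rfl
    obtain ⟨e, he, hend⟩ := hadj
    have he' : e.1 ∈ Subtype.val '' T ∪ E' := .inl ⟨e, he, rfl⟩
    rcases hend with ⟨h₁, h₂⟩ | ⟨h₁, h₂⟩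
    · exact ((ih (D.first e.1) h₁).trans (reach_of_incident he' (.inl rfl) (.inr rfl))).trans
        ((toContract_eq_iff.1 h₂).mono Set.subset_union_right)
    · exact ((ih (D.last e.1) h₂).trans (reach_of_incident he' (.inr rfl) (.inl rfl))).trans
        ((toContract_eq_iff.1 h₁).mono Set.subset_union_right)

lemma outdegRev_image_val {E' : Set D.E} (T : Set (D.contract E').E) (v : D.V) :
    D.outdegRev (Subtype.val '' T) ∅ v =
      {e ∈ (D.contract E').outEdges T (toContract E' v) | D.first e.1 = v}.ncard := by
  refine (outdegRev_eq_ncard _ _ _).trans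
    (Eq.trans ?_ (Set.ncard_image_of_injective _ Subtype.val_injective))
  congr 1
  ext e
  simp only [Set.sdiff_empty, Set.mem_empty_iff_false, false_and, or_false, Set.mem_ofPred_eq]
  constructor
  · rintro ⟨⟨e, he, rfl⟩, hv⟩
    exact ⟨e, ⟨⟨he, hv ▸ rfl⟩, hv⟩, rfl⟩
  · rintro ⟨e, ⟨⟨he, -⟩, hv⟩, rfl⟩
    exact ⟨⟨e, he, rfl⟩, hv⟩

lemma exists_classRoot {E' : Set D.E} {T : Set (D.contract E').E} {r : D.V}
    (hT : (D.contract E').IsOrientedSpanningTree T (toContract E' r)) :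
    ∃ ρ : (D.contract E').V → D.V, (∀ q, toContract E' (ρ q) = q) ∧ ρ (toContract E' r) = r ∧
      ∀ v, D.outdegRev (Subtype.val '' T) ∅ v =
        if v = ρ (toContract E' v) ∧ toContract E' v ≠ toContract E' r then 1 else 0 := by
  obtain ⟨-, -, hdeg, hdeg_r⟩ := hT
  simp only [outdegRev_empty] at hdeg hdeg_r
  rw [Set.ncard_eq_zero] at hdeg_r
  choose out hout using fun q hq => Set.ncard_eq_one.1 (hdeg q hq)
  refine ⟨fun q => if hq : q = toContract E' r then r else D.first (out q hq).1, fun q => ?_,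
    dif_pos rfl, fun v => ?_⟩
  · dsimp only
    split_ifs with hq
    · exact hq.symm
    · have hmem : out q hq ∈ (D.contract E').outEdges T q := (hout q hq).symm ▸ rfl
      exact hmem.2
  rw [outdegRev_image_val]
  by_cases hv : toContract E' v = toContract E' r
  · simp [hv, hdeg_r]
  · rw [hout _ hv]
    by_cases hfirst : D.first (out _ hv).1 = v
    · rw [show {e ∈ ({out _ hv} : Set _) | D.first e.1 = v} = {out _ hv} from
        Set.ext fun e => ⟨fun h => h.1, fun h => ⟨h, h ▸ hfirst⟩⟩, Set.ncard_singleton]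
      simp [hv, hfirst]
    · rw [show {e ∈ ({out _ hv} : Set _) | D.first e.1 = v} = ∅ from
        Set.eq_empty_of_forall_notMem fun e ⟨he, h⟩ => hfirst (he ▸ h), Set.ncard_empty]
      simp [hv, Ne.symm hfirst]

end Multidigraph

theorem stmt16_general (D : Multidigraph) (E' : Set D.E) (k : ℕ)
    (hcf : D.CycleFree E') (hcard : Nat.card E' = k) (r : D.V)
    (T : Set (D.contract E').E)
    (hT : (D.contract E').IsOrientedSpanningTree T
      (Quotient.mk (Relation.EqvGen.setoid (D.contractRel E')) r)) :
    ∃ i ≤ k, D.IsKSpanningTree ((Subtype.val '' T) ∪ E') r i := by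
  open Multidigraph in
  obtain ⟨ρ, hρ, hρr, hdegT⟩ := exists_classRoot hT
  set S := D.edgesPointingAway E' fun v => ρ (toContract E' v)
  have hdegE := hcf.outdegRev_edgesPointingAway (root := fun v => ρ (toContract E' v))
    (fun v => toContract_eq_iff.1 (hρ _).symm) fun a b h => by rw [toContract_eq_iff.2 h]
  have hS : S ⊆ E' := fun e he => he.1
  have hdisj : Disjoint (Subtype.val '' T) E' :=
    Set.disjoint_left.2 fun _ ⟨e, _, he⟩ => he ▸ e.2
  refine ⟨Nat.card S, hcard ▸ Nat.card_mono E'.toFinite hS, S, rfl,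
    isOrientedSpanningTreeRev_of_outdegRev (fun a b => Reach.of_contract (hT.1.1 _ _))
      (hS.trans Set.subset_union_right) fun v => ?_⟩
  rw [outdegRev_union hdisj hS, hdegT, hdegE]
  by_cases hvr : v = r
  · subst hvr
    simp [hρr]
  · have hroot : v = ρ (toContract E' v) → toContract E' v ≠ toContract E' r :=
      fun h h' => hvr (h.trans (h' ▸ hρr))
    split_ifs <;> tauto

/-- Let `D` be a connected digraph and `E'` a cycle-free set of
`k` edges. If `T` is an oriented spanning tree of the contraction `D/E'`
rooted at the image of `r`, then the subgraph of `D` with edge set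
`E(T) ∪ E'` is an `i`-spanning tree of `D` rooted at `r` for some `0 ≤ i ≤ k`. -/
theorem stmt16 (D : Multidigraph) (hconn : D.Connected) (E' : Set D.E) (k : ℕ)
    (hcf : D.CycleFree E') (hcard : Nat.card E' = k) (r : D.V)
    (T : Set (D.contract E').E)
    (hT : (D.contract E').IsOrientedSpanningTree T
      (Quotient.mk (Relation.EqvGen.setoid (D.contractRel E')) r)) :
    ∃ i ≤ k, D.IsKSpanningTree ((Subtype.val '' T) ∪ E') r i :=
  stmt16_general D E' k hcf hcard r T hT
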